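/- For every gauge function f there is an increasing function g ∈ ω^ω such that the Yorioka ideal I_g is contained in N^f = {A ⊆ 2^ω : ℋ^f(A) = 0}. -/

import Mathlib

/-!
Choose `g` increasing so fast that `f d ≤ 2^{-n}` whenever `d ≤ 2^{-g n}`. If `A ⊆ [σ]_∞` with
`ht σ ≫ g`, then eventually `|σ n| ≥ g n`, so the cylinder `[σ n]`, of diameter at most
`2^{-|σ n|}`, costs at most `2^{-n}`. As `[σ]_∞` is covered by the cylinders `[σ n]`, `n ≥ N`,
for every `N`, its `ℋ^f`-measure is bounded by the tails of `∑ 2^{-n}`, hence vanishes.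
-/

open MeasureTheory Set
open scoped ENNReal

/-- The Cantor space `2^ω = ℕ → Bool` carries the metric
`d(x,y) = 2^{-min{n : x n ≠ y n}}` (and `d(x,x) = 0`). -/
noncomputable local instance cantorMetric : MetricSpace (ℕ → Bool) := PiNat.metricSpace

/-- A gauge function: a nondecreasing function `f : [0,∞) → [0,∞)` with `f 0 = 0` and
`lim_{x → 0⁺} f x = 0`. -/
structure IsGauge (f : ℝ → ℝ) : Prop where
  nonneg : ∀ x : ℝ, 0 ≤ x → 0 ≤ f x
  zero : f 0 = 0
  mono : MonotoneOn f (Ici 0)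
  tendsto_zero : Filter.Tendsto f (nhdsWithin 0 (Ioi 0)) (nhds 0)

/-- The value `f(diam)` of a gauge function `f` on an extended-real diameter
(infinite diameters are sent to `∞`). -/
noncomputable def gaugeFn (f : ℝ → ℝ) : ℝ≥0∞ → ℝ≥0∞ := fun d =>
  if d = ∞ then ∞ else ENNReal.ofReal (f d.toReal)

/-- The Hausdorff (outer) measure `ℋ^f` with gauge function `f`. -/
noncomputable def gaugeMeasure {X : Type*} [EMetricSpace X] (f : ℝ → ℝ) : OuterMeasure X :=
  OuterMeasure.mkMetric (gaugeFn f)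

/-- `s` is an initial segment of `x : 2^ω`. -/
def InitSeg (s : List Bool) (x : ℕ → Bool) : Prop :=
  ∀ i : ℕ, (hi : i < s.length) → s.get ⟨i, hi⟩ = x i

/-- `[σ]_∞` : the set of `x ∈ 2^ω` having `σ n` as an initial segment for infinitely
many `n`. -/
def limsupCyl (σ : ℕ → List Bool) : Set (ℕ → Bool) :=
  {x | ∃ᶠ n in Filter.atTop, InitSeg (σ n) x}

/-- The ideal `J_g = {A ⊆ 2^ω : ∃ σ, ht σ = g and A ⊆ [σ]_∞}`. -/
def Jg (g : ℕ → ℕ) : Set (Set (ℕ → Bool)) :=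
  {A | ∃ σ : ℕ → List Bool, (∀ n, (σ n).length = g n) ∧ A ⊆ limsupCyl σ}

/-- `f ≪ g` iff for every `k`, `f (n^k) ≤ g n` for all but finitely many `n`. -/
def FastBelow (f g : ℕ → ℕ) : Prop := ∀ k : ℕ, ∀ᶠ n in Filter.atTop, f (n ^ k) ≤ g n

/-- The Yorioka ideal `I_f = ⋃_{g ≫ f} J_g`. -/
def Yorioka (f : ℕ → ℕ) : Set (Set (ℕ → Bool)) :=
  {A | ∃ g : ℕ → ℕ, FastBelow f g ∧ A ∈ Jg g}

open Filter Topology Metric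

namespace MeasureTheory.OuterMeasure

variable {X : Type*} [EMetricSpace X] (m : ℝ≥0∞ → ℝ≥0∞)

theorem mkMetric_limsup_eq_zero {t : ℕ → Set X}
    (ht : Tendsto (fun n => ediam (t n)) atTop (𝓝 0)) (hsum : ∑' n, m (ediam (t n)) ≠ ∞) :
    mkMetric m (limsup t atTop) = 0 := by
  -- `Measure.mkMetric_le_liminf_tsum` is only stated for the measure, so pass to Borel sets.
  borelize X
  rw [coe_mkMetric]
  set r : ℕ → ℝ≥0∞ := fun N => ⨆ k, ediam (t (k + N))
  have hr : Tendsto r atTop (𝓝 0) := by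
    refine ENNReal.tendsto_nhds_zero.2 fun ε hε => ?_
    obtain ⟨N₀, hN₀⟩ := eventually_atTop.1 (ENNReal.tendsto_nhds_zero.1 ht ε hε)
    exact eventually_atTop.2 ⟨N₀, fun N hN => iSup_le fun k => hN₀ _ (by omega)⟩
  have hcover : ∀ N, limsup t atTop ⊆ ⋃ k, t (k + N) := fun N x hx => by
    obtain ⟨n, hn, hxn⟩ := frequently_atTop.1 (mem_limsup_iff_frequently_mem.1 hx) N
    exact mem_iUnion.2 ⟨n - N, by rwa [Nat.sub_add_cancel hn]⟩
  refine nonpos_iff_eq_zero.1 ?_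
  calc (Measure.mkMetric m : Measure X) (limsup t atTop)
      ≤ liminf (fun N => ∑' k, m (ediam (t (k + N)))) atTop :=
        Measure.mkMetric_le_liminf_tsum _ r hr (fun N k => t (k + N))
          (Eventually.of_forall fun N k => le_iSup (fun k => ediam (t (k + N))) k)
          (Eventually.of_forall hcover) m
    _ = 0 := (ENNReal.tendsto_sum_nat_add _ hsum).liminf_eq

theorem mkMetric_limsup_eq_zero_of_eventually_le {t : ℕ → Set X} {u : ℕ → ℝ≥0∞}
    (ht : Tendsto (fun n => ediam (t n)) atTop (𝓝 0)) (hu : ∑' n, u n ≠ ∞)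
    (hm : ∀ᶠ n in atTop, m (ediam (t n)) ≤ u n) :
    mkMetric m (limsup t atTop) = 0 := by
  obtain ⟨N, hN⟩ := eventually_atTop.1 hm
  rw [← limsup_nat_add t N]
  refine mkMetric_limsup_eq_zero m (ht.comp (tendsto_add_atTop_nat N)) (ne_top_of_le_ne_top hu ?_)
  calc ∑' n, m (ediam (t (n + N))) ≤ ∑' n, u (n + N) :=
        ENNReal.tsum_le_tsum fun n => hN _ (Nat.le_add_left N n)
    _ ≤ ∑' n, u n := ENNReal.tsum_comp_le_tsum_of_injective (add_left_injective N) u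

end MeasureTheory.OuterMeasure

theorem IsGauge.tendsto_gaugeFn {f : ℝ → ℝ} (hf : IsGauge f) :
    Tendsto (gaugeFn f) (𝓝 0) (𝓝 0) := by
  have hf0 : ContinuousWithinAt f (Ici 0) 0 := continuousWithinAt_Ioi_iff_Ici.1 <| by
    rw [ContinuousWithinAt, hf.zero]
    exact hf.tendsto_zero
  have htoReal : Tendsto ENNReal.toReal (𝓝 0) (𝓝[Ici 0] 0) :=
    tendsto_nhdsWithin_iff.2 ⟨ENNReal.tendsto_toReal ENNReal.zero_ne_top,
      Eventually.of_forall fun _ => ENNReal.toReal_nonneg⟩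
  have hcomp : Tendsto (fun d : ℝ≥0∞ => ENNReal.ofReal (f d.toReal)) (𝓝 0) (𝓝 0) := by
    simpa [hf.zero, Function.comp_def] using
      (ENNReal.continuous_ofReal.tendsto _).comp (hf0.tendsto.comp htoReal)
  refine hcomp.congr' ?_
  filter_upwards [eventually_ne_nhds ENNReal.zero_ne_top] with d hd
  simp [gaugeFn, hd]

theorem IsGauge.exists_gaugeFn_le_inv_two_pow {f : ℝ → ℝ} (hf : IsGauge f) (n : ℕ) :
    ∃ k : ℕ, ∀ d ≤ (2⁻¹ : ℝ≥0∞) ^ k, gaugeFn f d ≤ 2⁻¹ ^ n := by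
  have hpos : (0 : ℝ≥0∞) < 2⁻¹ ^ n := ENNReal.pow_pos (by norm_num) n
  obtain ⟨ε, hε, hεf⟩ := ENNReal.nhds_zero_basis.mem_iff.1 (hf.tendsto_gaugeFn (Iic_mem_nhds hpos))
  obtain ⟨k, hk⟩ := ENNReal.exists_inv_two_pow_lt hε.ne'
  exact ⟨k, fun d hd => hεf (hd.trans_lt hk)⟩

theorem exists_strictMono_ge (m : ℕ → ℕ) : ∃ g : ℕ → ℕ, StrictMono g ∧ m ≤ g :=
  ⟨fun n => n + ∑ i ∈ Finset.range (n + 1), m i,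
    strictMono_nat_of_lt_succ fun n => by simp only [Finset.sum_range_succ _ (n + 1)]; omega,
    fun n => by simp only [Finset.sum_range_succ]; omega⟩

def cylinderOf (s : List Bool) : Set (ℕ → Bool) := {x | InitSeg s x}

theorem ediam_cylinderOf_le (s : List Bool) : ediam (cylinderOf s) ≤ 2⁻¹ ^ s.length := by
  refine ediam_le fun x hx y hy => ?_
  have hxy : x ∈ PiNat.cylinder y s.length :=
    PiNat.mem_cylinder_iff.2 fun i hi => (hx i hi).symm.trans (hy i hi)
  rw [edist_dist, ← ENNReal.ofReal_ofNat, ← ENNReal.ofReal_inv_of_pos two_pos,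
    ← ENNReal.ofReal_pow (by norm_num)]
  exact ENNReal.ofReal_le_ofReal (by simpa using PiNat.mem_cylinder_iff_dist_le.1 hxy)

theorem tendsto_ediam_cylinderOf {σ : ℕ → List Bool}
    (hσ : Tendsto (fun n => (σ n).length) atTop atTop) :
    Tendsto (fun n => ediam (cylinderOf (σ n))) atTop (𝓝 0) :=
  tendsto_of_tendsto_of_tendsto_of_le_of_le tendsto_const_nhds
    ((ENNReal.tendsto_pow_atTop_nhds_zero_of_lt_one (by norm_num)).comp hσ)
    (fun _ => zero_le) fun n => ediam_cylinderOf_le (σ n)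

theorem limsupCyl_eq_limsup (σ : ℕ → List Bool) :
    limsupCyl σ = limsup (fun n => cylinderOf (σ n)) atTop := by
  ext x
  rw [mem_limsup_iff_frequently_mem]
  rfl

/-- For every gauge function `f` there is an increasing `g ∈ ω^ω`
such that the Yorioka ideal `I_g` is contained in `N^f = {A ⊆ 2^ω : ℋ^f(A) = 0}`. -/
theorem stmt12 (f : ℝ → ℝ) (hf : IsGauge f) :
    ∃ g : ℕ → ℕ, StrictMono g ∧
      Yorioka g ⊆ {A : Set (ℕ → Bool) | gaugeMeasure f A = 0} := by
  choose k hk using hf.exists_gaugeFn_le_inv_two_pow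
  obtain ⟨g, hg, hkg⟩ := exists_strictMono_ge k
  refine ⟨g, hg, ?_⟩
  rintro A ⟨h, hfast, σ, hlen, hA⟩
  have hgh : ∀ᶠ n in atTop, g n ≤ (σ n).length := by simpa [hlen] using hfast 1
  have hσ : Tendsto (fun n => (σ n).length) atTop atTop :=
    tendsto_atTop_mono' atTop hgh hg.tendsto_atTop
  refine measure_mono_null hA ?_
  rw [limsupCyl_eq_limsup]
  refine OuterMeasure.mkMetric_limsup_eq_zero_of_eventually_le (u := fun n => 2⁻¹ ^ n) _
    (tendsto_ediam_cylinderOf hσ) ?_ ?_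
  · rw [ENNReal.tsum_geometric, ENNReal.one_sub_inv_two, inv_inv]
    exact ENNReal.ofNat_ne_top
  · filter_upwards [hgh] with n hn
    exact hk n _ ((ediam_cylinderOf_le _).trans
      (pow_le_pow_right_of_le_one' (by norm_num) ((hkg n).trans hn)))
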